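/- Let a be strongly degenerate at x₀ ∈ (0,1). Then for every u ∈ H²_a(0,1) with u'(0) = u'(1) = 0 and every v ∈ H¹_a(0,1), one has ∫₀¹ (a u')'(x) v(x) dx = − ∫₀¹ a(x) u'(x) v'(x) dx. -/

import Mathlib

open MeasureTheory Set Filter

noncomputable section

/-- Absolute continuity of `u` on `[c,d]`, encoded via the fundamental theorem of calculus
with an integrable derivative. -/
def ACOn (u : ℝ → ℝ) (c d : ℝ) : Prop :=
  IntervalIntegrable (deriv u) volume c d ∧
    ∀ x ∈ Icc c d, u x = u c + ∫ t in c..x, deriv u t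

/-- Membership in `H¹(0,1)`. -/
def MemH1 (u : ℝ → ℝ) : Prop :=
  ACOn u 0 1 ∧ IntegrableOn (fun x => (u x)^2) (Ioo 0 1) ∧
    IntegrableOn (fun x => (deriv u x)^2) (Ioo 0 1)

/-- `a ∈ W^{1,1}(0,1)`. -/
def W11 (a : ℝ → ℝ) : Prop := ACOn a 0 1

/-- `a ∈ W^{1,∞}(0,1)`. -/
def W1infty (a : ℝ → ℝ) : Prop :=
  ACOn a 0 1 ∧ ∃ M : ℝ, ∀ᵐ x ∂(volume.restrict (Icc (0:ℝ) 1)), |deriv a x| ≤ M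

/-- Common part of the degeneracy conditions at `x₀` with constant `K`. -/
def DegAt (a : ℝ → ℝ) (x₀ K : ℝ) : Prop :=
  x₀ ∈ Ioo (0:ℝ) 1 ∧ a x₀ = 0 ∧ (∀ x ∈ Icc (0:ℝ) 1, x ≠ x₀ → 0 < a x) ∧
    ∀ᵐ x ∂(volume.restrict (Icc (0:ℝ) 1)), (x - x₀) * deriv a x ≤ K * a x

/-- `a` is weakly degenerate at `x₀` with constant `K`. -/
def WeaklyDeg (a : ℝ → ℝ) (x₀ K : ℝ) : Prop :=
  DegAt a x₀ K ∧ W11 a ∧ K ∈ Ioo (0:ℝ) 1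

/-- `a` is strongly degenerate at `x₀` with constant `K`. -/
def StronglyDeg (a : ℝ → ℝ) (x₀ K : ℝ) : Prop :=
  DegAt a x₀ K ∧ W1infty a ∧ K ∈ Ico (1:ℝ) 2

/-- Weakly (`wk = true`) or strongly (`wk = false`) degenerate. -/
def Deg (a : ℝ → ℝ) (x₀ K : ℝ) (wk : Bool) : Prop :=
  cond wk (WeaklyDeg a x₀ K) (StronglyDeg a x₀ K)

/-- `H¹_a(0,1)` in the weakly degenerate case: absolutely continuous on `[0,1]`
with `√a · u' ∈ L²(0,1)`. -/
def MemH1aWeak (a u : ℝ → ℝ) : Prop :=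
  ACOn u 0 1 ∧ IntegrableOn (fun x => a x * (deriv u x)^2) (Ioo 0 1)

/-- Locally absolutely continuous on `[0,x₀) ∪ (x₀,1]`. -/
def LocACAway (u : ℝ → ℝ) (x₀ : ℝ) : Prop :=
  (∀ c d : ℝ, 0 ≤ c → c ≤ d → d < x₀ → ACOn u c d) ∧
  (∀ c d : ℝ, x₀ < c → c ≤ d → d ≤ 1 → ACOn u c d)

/-- `H¹_a(0,1)` in the strongly degenerate case. -/
def MemH1aStrong (a u : ℝ → ℝ) (x₀ : ℝ) : Prop :=
  IntegrableOn (fun x => (u x)^2) (Ioo 0 1) ∧ LocACAway u x₀ ∧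
    IntegrableOn (fun x => a x * (deriv u x)^2) (Ioo 0 1)

/-- `H¹_a(0,1)`, weak (`wk = true`) or strong (`wk = false`) version. -/
def MemH1a (a u : ℝ → ℝ) (x₀ : ℝ) (wk : Bool) : Prop :=
  cond wk (MemH1aWeak a u) (MemH1aStrong a u x₀)

/-- `H²_a(0,1) = {u ∈ H¹_a(0,1) : a u' ∈ H¹(0,1)}`. -/
def MemH2a (a u : ℝ → ℝ) (x₀ : ℝ) (wk : Bool) : Prop :=
  MemH1a a u x₀ wk ∧ ACOn (fun x => a x * deriv u x) 0 1 ∧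
    IntegrableOn (fun x => (deriv (fun y => a y * deriv u y) x)^2) (Ioo 0 1)

/-- `D(A₁) = {u ∈ H²_a(0,1) : u'(0) = u'(1) = 0}`. -/
def MemDA1 (a u : ℝ → ℝ) (x₀ : ℝ) (wk : Bool) : Prop :=
  MemH2a a u x₀ wk ∧ deriv u 0 = 0 ∧ deriv u 1 = 0

/-- `L²_{1/a}(0,1)`. -/
def MemL2inva (a u : ℝ → ℝ) : Prop :=
  IntegrableOn (fun x => (u x)^2) (Ioo 0 1) ∧
    IntegrableOn (fun x => (u x)^2 / a x) (Ioo 0 1)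

/-- `H¹_{1/a}(0,1) = L²_{1/a}(0,1) ∩ H¹(0,1)`. -/
def MemH1inva (a u : ℝ → ℝ) : Prop :=
  MemL2inva a u ∧ ACOn u 0 1 ∧ IntegrableOn (fun x => (deriv u x)^2) (Ioo 0 1)

/-- `H²_{1/a}(0,1) = {u ∈ H¹_{1/a}(0,1) : u' ∈ H¹(0,1)}` (then `a u'' ∈ L²_{1/a}`). -/
def MemH2inva (a u : ℝ → ℝ) : Prop :=
  MemH1inva a u ∧ ACOn (deriv u) 0 1 ∧
    IntegrableOn (fun x => a x * (deriv (deriv u) x)^2) (Ioo 0 1)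

/-- `D(A₂) = {u ∈ H²_{1/a}(0,1) : u'(0) = u'(1) = 0}`. -/
def MemDA2 (a u : ℝ → ℝ) : Prop :=
  MemH2inva a u ∧ deriv u 0 = 0 ∧ deriv u 1 = 0

/-- The time weight `Θ(t) = 1/(t(T-t))⁴`. -/
def Theta (T t : ℝ) : ℝ := 1 / (t * (T - t))^4

/-- The space weight `ψ(x) = c₁ (∫_{x₀}^x (y-x₀)/a(y) dy − c₂)`. -/
def psiW (a : ℝ → ℝ) (x₀ c₁ c₂ x : ℝ) : ℝ :=
  c₁ * ((∫ y in x₀..x, (y - x₀) / a y) - c₂)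

/-- The weight `φ(t,x) = Θ(t) ψ(x)`. -/
def phiW (a : ℝ → ℝ) (x₀ c₁ c₂ T t x : ℝ) : ℝ := Theta T t * psiW a x₀ c₁ c₂ x

/-- The space weight `μ(x) = d₁ (∫_{x₀}^x (y-x₀)e^{R(y-x₀)²}/a(y) dy − d₂)`. -/
def muW (a : ℝ → ℝ) (x₀ d₁ d₂ R x : ℝ) : ℝ :=
  d₁ * ((∫ y in x₀..x, (y - x₀) * Real.exp (R * (y - x₀)^2) / a y) - d₂)

/-- The weight `γ(t,x) = Θ(t) μ(x)`. -/
def gammaW (a : ℝ → ℝ) (x₀ d₁ d₂ R T t x : ℝ) : ℝ := Theta T t * muW a x₀ d₁ d₂ R x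

/-- Hypotheses (A) of the divergence-form Carleman estimate. -/
def HypA (a : ℝ → ℝ) (x₀ K : ℝ) (wk : Bool) : Prop :=
  cond wk
    (WeaklyDeg a x₀ K ∧ ContDiffOn ℝ 1 a (Icc 0 1 \ {x₀}))
    (StronglyDeg a x₀ K ∧
      (4/3 < K → ∃ ϑ, ϑ ∈ Ioc (0:ℝ) K ∧
        AntitoneOn (fun x => a x / |x - x₀| ^ ϑ) (Ico 0 x₀) ∧
        MonotoneOn (fun x => a x / |x - x₀| ^ ϑ) (Ioc x₀ 1) ∧
        (3/2 < K →
          (∃ ε > 0, ∀ x ∈ Icc (0:ℝ) 1, x ≠ x₀ → ε ≤ a x / |x - x₀| ^ ϑ) ∧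
          ∃ S > 0, ∀ᵐ x ∂(volume.restrict (Icc (0:ℝ) 1)),
            |deriv a x| ≤ S * |x - x₀| ^ (2*ϑ - 3))))

/-- Hypotheses (B) of the non-divergence-form Carleman estimate. -/
def HypB (a : ℝ → ℝ) (x₀ K : ℝ) (wk : Bool) : Prop :=
  Deg a x₀ K wk ∧
  (∃ L : NNReal, LipschitzOnWith L (fun x => (x - x₀) * deriv a x / a x) (Icc 0 1)) ∧
  (1/2 ≤ K → ∃ ϑ, ϑ ∈ Ioc (0:ℝ) K ∧
      AntitoneOn (fun x => a x / |x - x₀| ^ ϑ) (Ico 0 x₀) ∧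
      MonotoneOn (fun x => a x / |x - x₀| ^ ϑ) (Ioc x₀ 1))

/-- `g ∈ L^∞_loc([0,1] ∖ {x₀})`. -/
def LocBddAway (g : ℝ → ℝ) (x₀ : ℝ) : Prop :=
  ∀ c d : ℝ, Icc c d ⊆ Icc (0:ℝ) 1 \ {x₀} →
    ∃ M : ℝ, ∀ x ∈ Icc c d, |g x| ≤ M

/-- `h ∈ W^{1,∞}_loc([0,1] ∖ {x₀}; L^∞(0,1))`. -/
def LocW1inftyAway (h : ℝ → ℝ → ℝ) (x₀ : ℝ) : Prop :=
  ∀ c d : ℝ, Icc c d ⊆ Icc (0:ℝ) 1 \ {x₀} →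
    (∃ M : ℝ, ∀ x ∈ Icc c d, ∀ B ∈ Icc (0:ℝ) 1, |h x B| ≤ M) ∧
    ∃ L : NNReal, ∀ B ∈ Icc (0:ℝ) 1, LipschitzOnWith L (fun x => h x B) (Icc c d)

/-- Hypothesis (O) (with `σ = -1`) resp. (O') (with `σ = 1`):
`σ (a'/(2√a))(∫ₓᴮ g + h₀) + √a g = h(x,B)` for a.e. `x` and all admissible `B`. -/
def HypOgen (σ : ℝ) (a g : ℝ → ℝ) (h : ℝ → ℝ → ℝ) (g₀ h₀ x₀ : ℝ) : Prop :=
  0 < g₀ ∧ 0 < h₀ ∧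
  (∀ᵐ x ∂(volume.restrict (Icc (0:ℝ) 1)), g₀ ≤ g x) ∧
  LocBddAway g x₀ ∧ LocW1inftyAway h x₀ ∧
  ∀ᵐ x ∂(volume.restrict (Icc (0:ℝ) 1)), ∀ B ∈ Icc (0:ℝ) 1,
    ((x < B ∧ B < x₀) ∨ (x₀ < x ∧ x < B)) →
      σ * (deriv a x / (2 * Real.sqrt (a x))) * ((∫ t in x..B, g t) + h₀)
        + Real.sqrt (a x) * g x = h x B

/-- The space-time cylinder `Q_T = (0,T) × (0,1)`. -/
def QT (T : ℝ) : Set (ℝ × ℝ) := Ioo 0 T ×ˢ Ioo (0:ℝ) 1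

/-- The class `𝒱 = L²(0,T; D(A₁)) ∩ H¹(0,T; H¹_a(0,1))`. -/
def InClassV (a : ℝ → ℝ) (x₀ T : ℝ) (wk : Bool) (v : ℝ → ℝ → ℝ) : Prop :=
  (∀ t ∈ Ioo (0:ℝ) T, MemDA1 a (v t) x₀ wk) ∧
  IntegrableOn (fun p : ℝ × ℝ =>
    (v p.1 p.2)^2 + a p.2 * (deriv (v p.1) p.2)^2
      + (deriv (fun y => a y * deriv (v p.1) y) p.2)^2) (QT T) ∧
  IntegrableOn (fun p : ℝ × ℝ =>
    (deriv (fun τ => v τ p.2) p.1)^2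
      + a p.2 * (deriv (fun y => deriv (fun τ => v τ y) p.1) p.2)^2) (QT T)

/-- The class `𝒮 = H¹(0,T; H¹_{1/a}(0,1)) ∩ L²(0,T; H²_{1/a}(0,1))`. -/
def InClassS (a : ℝ → ℝ) (T : ℝ) (v : ℝ → ℝ → ℝ) : Prop :=
  (∀ t ∈ Ioo (0:ℝ) T, MemH2inva a (v t)) ∧
  IntegrableOn (fun p : ℝ × ℝ =>
    (v p.1 p.2)^2 / a p.2 + (deriv (v p.1) p.2)^2
      + a p.2 * (deriv (deriv (v p.1)) p.2)^2) (QT T) ∧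
  IntegrableOn (fun p : ℝ × ℝ =>
    (deriv (fun τ => v τ p.2) p.1)^2 / a p.2
      + (deriv (fun y => deriv (fun τ => v τ y) p.1) p.2)^2) (QT T)

/-- Neumann boundary conditions `v_x(t,0) = v_x(t,1) = 0` for `t ∈ (0,T)`. -/
def NeumannBC (T : ℝ) (v : ℝ → ℝ → ℝ) : Prop :=
  ∀ t ∈ Ioo (0:ℝ) T, deriv (v t) 0 = 0 ∧ deriv (v t) 1 = 0

/-- The equation `v_t + (a v_x)_x = h` in `Q_T`. -/
def SolDiv (a : ℝ → ℝ) (T : ℝ) (v h : ℝ → ℝ → ℝ) : Prop :=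
  ∀ t ∈ Ioo (0:ℝ) T, ∀ x ∈ Ioo (0:ℝ) 1,
    deriv (fun τ => v τ x) t + deriv (fun y => a y * deriv (v t) y) x = h t x

/-- The equation `v_t + a v_xx = h` in `Q_T`. -/
def SolNonDiv (a : ℝ → ℝ) (T : ℝ) (v h : ℝ → ℝ → ℝ) : Prop :=
  ∀ t ∈ Ioo (0:ℝ) T, ∀ x ∈ Ioo (0:ℝ) 1,
    deriv (fun τ => v τ x) t + a x * deriv (deriv (v t)) x = h t x

/-- Test function class `H¹(0,T; L²(0,1)) ∩ L²(0,T; H¹_a(0,1))` for the weak formulation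
in divergence form. -/
def TestClassDiv (a : ℝ → ℝ) (x₀ T : ℝ) (wk : Bool) (φ : ℝ → ℝ → ℝ) : Prop :=
  (∀ t ∈ Icc (0:ℝ) T, MemH1a a (φ t) x₀ wk) ∧
  IntegrableOn (fun p : ℝ × ℝ =>
    (φ p.1 p.2)^2 + a p.2 * (deriv (φ p.1) p.2)^2
      + (deriv (fun τ => φ τ p.2) p.1)^2) (QT T)

/-- Weak solution of `v_t + (a v_x)_x = 0` with Neumann boundary conditions. -/
def WeakSolDiv (a : ℝ → ℝ) (x₀ T : ℝ) (wk : Bool) (v : ℝ → ℝ → ℝ) : Prop :=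
  (∀ t ∈ Icc (0:ℝ) T, MemH1a a (v t) x₀ wk) ∧
  IntegrableOn (fun p : ℝ × ℝ =>
    (v p.1 p.2)^2 + a p.2 * (deriv (v p.1) p.2)^2) (QT T) ∧
  ∀ φ : ℝ → ℝ → ℝ, TestClassDiv a x₀ T wk φ →
    (∫ x in Ioo (0:ℝ) 1, v T x * φ T x) - (∫ x in Ioo (0:ℝ) 1, v 0 x * φ 0 x)
      - (∫ t in Ioo (0:ℝ) T, ∫ x in Ioo (0:ℝ) 1, v t x * deriv (fun τ => φ τ x) t)
      = ∫ t in Ioo (0:ℝ) T, ∫ x in Ioo (0:ℝ) 1, a x * deriv (v t) x * deriv (φ t) x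

/-- Test function class `H¹(0,T; L²_{1/a}(0,1)) ∩ L²(0,T; H¹_{1/a}(0,1))` for the weak
formulation in non-divergence form. -/
def TestClassNonDiv (a : ℝ → ℝ) (T : ℝ) (φ : ℝ → ℝ → ℝ) : Prop :=
  (∀ t ∈ Icc (0:ℝ) T, MemH1inva a (φ t)) ∧
  IntegrableOn (fun p : ℝ × ℝ =>
    (φ p.1 p.2)^2 / a p.2 + (deriv (φ p.1) p.2)^2
      + (deriv (fun τ => φ τ p.2) p.1)^2 / a p.2) (QT T)

/-- Weak solution of `v_t + a v_xx = 0` with Neumann boundary conditions. -/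
def WeakSolNonDiv (a : ℝ → ℝ) (T : ℝ) (v : ℝ → ℝ → ℝ) : Prop :=
  (∀ t ∈ Icc (0:ℝ) T, MemH1inva a (v t)) ∧
  IntegrableOn (fun p : ℝ × ℝ =>
    (v p.1 p.2)^2 / a p.2 + (deriv (v p.1) p.2)^2) (QT T) ∧
  ∀ φ : ℝ → ℝ → ℝ, TestClassNonDiv a T φ →
    (∫ x in Ioo (0:ℝ) 1, v T x * φ T x / a x) - (∫ x in Ioo (0:ℝ) 1, v 0 x * φ 0 x / a x)
      - (∫ t in Ioo (0:ℝ) T, ∫ x in Ioo (0:ℝ) 1, v t x * deriv (fun τ => φ τ x) t / a x)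
      = ∫ t in Ioo (0:ℝ) T, ∫ x in Ioo (0:ℝ) 1, deriv (v t) x * deriv (φ t) x

end

/-! Write `w = a u'`; the claim is `∫₀¹ (w' v + w v') = 0`. Both products are integrable
(`w', v ∈ L²` and `|a u' v'| ≤ a (u'² + v'²) / 2`), so `w v` has one-sided limits at `x₀`, and
integrating by parts on `[0, s]` and `[s, 1]` (where `w` vanishes at the endpoints) reduces the
claim to these limits being `0`. Since `w(x₀) = 0` and `w' ∈ L²`, Cauchy–Schwarz gives
`w(x)² ≤ C |x - x₀|`; a nonzero limit `L` would force `v(x)² ≥ L² / (2C |x - x₀|)` near `x₀`,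
which is not integrable, contradicting `v ∈ L²`. -/

open Topology

theorem AbsolutelyContinuousOnInterval.congr {f g : ℝ → ℝ} {a b : ℝ}
    (hf : AbsolutelyContinuousOnInterval f a b) (hfg : EqOn f g (uIcc a b)) :
    AbsolutelyContinuousOnInterval g a b := by
  refine Tendsto.congr' ?_ hf
  filter_upwards [eventually_inf_principal.2 (Eventually.of_forall fun _ h => h)] with E hE
  refine Finset.sum_congr rfl fun i hi => ?_
  rw [hfg (hE.1 i hi).1, hfg (hE.1 i hi).2]

theorem ACOn.absolutelyContinuousOnInterval {u : ℝ → ℝ} {c d : ℝ} (h : ACOn u c d)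
    (hcd : c ≤ d) : AbsolutelyContinuousOnInterval u c d := by
  have hconst : AbsolutelyContinuousOnInterval (fun _ => u c) c d :=
    (LipschitzWith.const (u c)).lipschitzOnWith.absolutelyContinuousOnInterval
  refine (hconst.fun_add
    (h.1.absolutelyContinuousOnInterval_intervalIntegral left_mem_uIcc)).congr fun x hx => ?_
  rw [uIcc_of_le hcd] at hx
  exact (h.2 x hx).symm

theorem sq_integral_le_measureReal_mul_integral_sq {α : Type*} [MeasurableSpace α]
    {μ : Measure α} [IsFiniteMeasure μ] {f : α → ℝ} (hf : Integrable f μ)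
    (hf2 : Integrable (fun x => f x ^ 2) μ) :
    (∫ x, f x ∂μ) ^ 2 ≤ μ.real univ * ∫ x, f x ^ 2 ∂μ := by
  have hquad (t : ℝ) :
      0 ≤ μ.real univ * (t * t) + (-2 * ∫ x, f x ∂μ) * t + ∫ x, f x ^ 2 ∂μ := by
    have hexp : ∫ x, (f x - t) ^ 2 ∂μ
        = μ.real univ * (t * t) + (-2 * ∫ x, f x ∂μ) * t + ∫ x, f x ^ 2 ∂μ := by
      have h : ∀ x, (f x - t) ^ 2 = (f x ^ 2 + -2 * t * f x) + t * t := fun x => by ring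
      simp_rw [h]
      rw [integral_add (f := fun x => f x ^ 2 + -2 * t * f x) (hf2.add (hf.const_mul _))
          (integrable_const _), integral_add hf2 (hf.const_mul _), integral_const_mul,
        integral_const, smul_eq_mul]
      ring
    exact hexp ▸ integral_nonneg fun x => sq_nonneg _
  have := discrim_le_zero hquad
  rw [discrim] at this
  linarith

theorem ACOn.sq_sub_le {w : ℝ → ℝ} {c d x y : ℝ} (hw : ACOn w c d)
    (hw' : IntegrableOn (fun t => deriv w t ^ 2) (Icc c d)) (hx : x ∈ Icc c d)
    (hy : y ∈ Icc c d) :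
    (w y - w x) ^ 2 ≤ |y - x| * ∫ t in Icc c d, deriv w t ^ 2 := by
  wlog hxy : x ≤ y generalizing x y
  · rw [← neg_sub, neg_sq, abs_sub_comm]
    exact this hy hx (le_of_not_ge hxy)
  have hsub : Ioc x y ⊆ Icc c d := Ioc_subset_Icc_self.trans (Icc_subset_Icc hx.1 hy.2)
  have hftc : w y - w x = ∫ t in Ioc x y, deriv w t := by
    rw [← intervalIntegral.integral_of_le hxy, ((hw.absolutelyContinuousOnInterval
      (hx.1.trans hx.2)).mono (uIcc_subset_uIcc (Icc_subset_uIcc hx) (Icc_subset_uIcc hy)))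
      |>.integral_deriv_eq_sub]
  have hint : IntegrableOn (deriv w) (Ioc x y) := by
    rw [← intervalIntegrable_iff_integrableOn_Ioc_of_le hxy]
    exact hw.1.mono_set (uIcc_subset_uIcc (Icc_subset_uIcc hx) (Icc_subset_uIcc hy))
  calc (w y - w x) ^ 2 = (∫ t in Ioc x y, deriv w t) ^ 2 := by rw [hftc]
    _ ≤ (y - x) * ∫ t in Ioc x y, deriv w t ^ 2 := by
      simpa [Real.volume_real_Ioc_of_le hxy] using
        sq_integral_le_measureReal_mul_integral_sq hint (hw'.mono_set hsub)
    _ ≤ |y - x| * ∫ t in Icc c d, deriv w t ^ 2 := by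
      rw [abs_of_nonneg (sub_nonneg.2 hxy)]
      exact mul_le_mul_of_nonneg_left (setIntegral_mono_set hw'
        (Eventually.of_forall fun t => sq_nonneg _) hsub.eventuallyLE) (sub_nonneg.2 hxy)

theorem not_integrableOn_abs_sub_inv {l : Filter ℝ} [l.NeBot] [TendstoIxxClass Icc l l]
    {c : ℝ} {k : Set ℝ} (hl : l ≤ 𝓝[≠] c) (hk : k ∈ l) :
    ¬ IntegrableOn (fun x => |x - c|⁻¹) k := by
  have hlog : ∀ᶠ x in l, HasDerivAt (fun x => Real.log (x - c)) (x - c)⁻¹ x := by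
    filter_upwards [hl self_mem_nhdsWithin] with x hx
    simpa using ((hasDerivAt_id x).sub_const c).log (sub_ne_zero.2 hx)
  have hlog_infty : Tendsto (fun x => ‖Real.log (x - c)‖) l atTop := by
    refine tendsto_abs_atBot_atTop.comp (Real.tendsto_log_nhdsNE_zero.comp ?_)
    rw [← sub_self c]
    exact (((hasDerivAt_id c).sub_const c).tendsto_nhdsNE one_ne_zero).mono_left hl
  refine not_integrableOn_of_tendsto_norm_atTop_of_deriv_isBigO_filter l hk
    (hlog.mono fun x hx => hx.differentiableAt) hlog_infty
    (Asymptotics.IsBigO.of_bound 1 ?_)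
  filter_upwards [hlog] with x hx
  simp [hx.deriv]

theorem eq_zero_of_tendsto_mul_of_sq_le {l : Filter ℝ} [l.NeBot] [TendstoIxxClass Icc l l]
    [l.IsMeasurablyGenerated] {c L M : ℝ} {w v : ℝ → ℝ} {k : Set ℝ}
    (hl : l ≤ 𝓝[≠] c) (hk : k ∈ l) (hv : IntegrableOn (fun x => v x ^ 2) k)
    (hw : ∀ᶠ x in l, w x ^ 2 ≤ M * |x - c|) (hwv : Tendsto (fun x => w x * v x) l (𝓝 L)) :
    L = 0 := by
  by_contra hL
  have hL2 : 0 < L ^ 2 := by positivity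
  have hlarge : ∀ᶠ x in l, L ^ 2 / 2 < (w x * v x) ^ 2 :=
    (hwv.pow 2).eventually (lt_mem_nhds (by linarith))
  have hbound : ∀ᶠ x in l, x ∈ k ∧ |x - c|⁻¹ ≤ 2 * M / L ^ 2 * v x ^ 2 := by
    filter_upwards [hk, hlarge, hw, hl self_mem_nhdsWithin] with x hxk h1 h2 h3
    refine ⟨hxk, ?_⟩
    have hpos : 0 < |x - c| := abs_pos.2 (sub_ne_zero.2 h3)
    rw [inv_le_iff_one_le_mul₀ hpos, show 2 * M / L ^ 2 * v x ^ 2 * |x - c|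
      = 2 * (M * |x - c| * v x ^ 2) / L ^ 2 by ring, one_le_div hL2]
    nlinarith [mul_le_mul_of_nonneg_right h2 (sq_nonneg (v x))]
  obtain ⟨k', hk'l, hk'm, hk'⟩ := hbound.exists_measurable_mem
  refine not_integrableOn_abs_sub_inv hl hk'l (Integrable.mono'
    ((hv.mono_set fun x hx => (hk' x hx).1).const_mul (2 * M / L ^ 2))
    (measurable_id.sub_const c).abs.inv.aestronglyMeasurable ?_)
  refine (ae_restrict_mem hk'm).mono fun x hx => ?_
  rw [Real.norm_of_nonneg (inv_nonneg.2 (abs_nonneg _))]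
  exact (hk' x hx).2

theorem integrable_mul_mul_of_integrable_mul_sq {α : Type*} [MeasurableSpace α] {μ : Measure α}
    {ρ f g : α → ℝ} (hρ : ∀ᵐ x ∂μ, 0 ≤ ρ x)
    (hm : AEStronglyMeasurable (fun x => ρ x * f x * g x) μ)
    (hf : Integrable (fun x => ρ x * f x ^ 2) μ) (hg : Integrable (fun x => ρ x * g x ^ 2) μ) :
    Integrable (fun x => ρ x * f x * g x) μ := by
  refine ((hf.add hg).div_const 2).mono' hm ?_
  filter_upwards [hρ] with x hx
  rw [Pi.add_apply, Real.norm_eq_abs, abs_mul, abs_mul, abs_of_nonneg hx]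
  nlinarith [mul_nonneg hx (sq_nonneg (|f x| - |g x|)), sq_abs (f x), sq_abs (g x)]

theorem LocACAway.continuousOn {v : ℝ → ℝ} {x₀ : ℝ} (h : LocACAway v x₀) :
    ContinuousOn v (Icc 0 1 \ {x₀}) := by
  rintro x ⟨hx, hxx₀⟩
  rcases lt_or_gt_of_ne hxx₀ with hlt | hgt
  · have hm : x < (x + x₀) / 2 := by linarith
    have hv := ((h.1 0 ((x + x₀) / 2) le_rfl (by linarith [hx.1]) (by linarith))
      |>.absolutelyContinuousOnInterval (by linarith [hx.1])).continuousOn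
    rw [uIcc_of_le (by linarith [hx.1])] at hv
    refine (hv x ⟨hx.1, hm.le⟩).mono_of_mem_nhdsWithin ?_
    filter_upwards [self_mem_nhdsWithin, nhdsWithin_le_nhds (Iic_mem_nhds hm)] with y hy hym
    exact ⟨hy.1.1, hym⟩
  · have hm : (x₀ + x) / 2 < x := by linarith
    have hv := ((h.2 ((x₀ + x) / 2) 1 (by linarith) (by linarith [hx.2]) le_rfl)
      |>.absolutelyContinuousOnInterval (by linarith [hx.2])).continuousOn
    rw [uIcc_of_le (by linarith [hx.2])] at hv
    refine (hv x ⟨hm.le, hx.2⟩).mono_of_mem_nhdsWithin ?_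
    filter_upwards [self_mem_nhdsWithin, nhdsWithin_le_nhds (Ici_mem_nhds hm)] with y hy hym
    exact ⟨hym, hy.1.2⟩

theorem LocACAway.aestronglyMeasurable {v : ℝ → ℝ} {x₀ : ℝ} (h : LocACAway v x₀) :
    AEStronglyMeasurable v (volume.restrict (Icc 0 1)) := by
  rw [← Measure.restrict_congr_set (sdiff_null_ae_eq_self (measure_singleton x₀))]
  exact h.continuousOn.aestronglyMeasurable (measurableSet_Icc.diff (measurableSet_singleton _))

theorem AbsolutelyContinuousOnInterval.mul_sub_mul_eq_integral {f g : ℝ → ℝ} {c d s t : ℝ}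
    (hf : AbsolutelyContinuousOnInterval f c d) (hg : ACOn g s t) (hs : s ∈ Icc c d)
    (ht : t ∈ Icc c d) (hst : s ≤ t) :
    f t * g t - f s * g s = ∫ x in s..t, deriv f x * g x + f x * deriv g x :=
  ((hf.mono (uIcc_subset_uIcc (Icc_subset_uIcc hs) (Icc_subset_uIcc ht)))
    |>.integral_deriv_mul_eq_sub (hg.absolutelyContinuousOnInterval hst)).symm

theorem integral_deriv_mul_add_mul_deriv_eq_zero {w v : ℝ → ℝ} {x₀ : ℝ}
    (hx₀ : x₀ ∈ Ioo 0 1) (hw : ACOn w 0 1) (hw' : IntegrableOn (fun x => deriv w x ^ 2) (Ioo 0 1))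
    (hw0 : w 0 = 0) (hw1 : w 1 = 0) (hwx₀ : w x₀ = 0) (hv : LocACAway v x₀)
    (hv2 : IntegrableOn (fun x => v x ^ 2) (Ioo 0 1))
    (hP : IntervalIntegrable (fun x => deriv w x * v x + w x * deriv v x) volume 0 1) :
    ∫ x in (0:ℝ)..1, deriv w x * v x + w x * deriv v x = 0 := by
  set F := fun t => ∫ x in (0:ℝ)..t, deriv w x * v x + w x * deriv v x
  have hwAC := hw.absolutelyContinuousOnInterval zero_le_one
  have hx₀' : x₀ ∈ Icc (0:ℝ) 1 := Ioo_subset_Icc_self hx₀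
  have hleft : ∀ s ∈ Ico 0 x₀, w s * v s = F s := by
    intro s hs
    have := hwAC.mul_sub_mul_eq_integral (hv.1 0 s le_rfl hs.1 hs.2)
      (left_mem_Icc.2 zero_le_one) ⟨hs.1, hs.2.le.trans hx₀'.2⟩ hs.1
    rwa [hw0, zero_mul, sub_zero] at this
  have hright : ∀ s ∈ Ioc x₀ 1, w s * v s = F s - F 1 := by
    intro s hs
    have hs' : s ∈ Icc (0:ℝ) 1 := ⟨hx₀'.1.trans hs.1.le, hs.2⟩
    have hibp := hwAC.mul_sub_mul_eq_integral (hv.2 s 1 hs.1 hs.2 le_rfl) hs'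
      (right_mem_Icc.2 zero_le_one) hs.2
    have hsplit : F 1 - F s = _ := intervalIntegral.integral_interval_sub_left hP
      (hP.mono_set (uIcc_subset_uIcc left_mem_uIcc (Icc_subset_uIcc hs')))
    rw [hw1, zero_mul, zero_sub] at hibp
    linarith
  have hFx₀ : ContinuousAt F x₀ :=
    (intervalIntegral.continuousOn_primitive_interval' hP left_mem_uIcc).continuousAt
      (by rw [uIcc_of_le zero_le_one]; exact Icc_mem_nhds hx₀.1 hx₀.2)
  have hw_sq :
      ∀ᶠ x in 𝓝 x₀, w x ^ 2 ≤ (∫ t in Icc 0 1, deriv w t ^ 2) * |x - x₀| := by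
    filter_upwards [Icc_mem_nhds hx₀.1 hx₀.2] with x hx
    have := hw.sq_sub_le ((integrableOn_Icc_iff_integrableOn_Ioo).2 hw') hx₀' hx
    rwa [hwx₀, sub_zero, mul_comm] at this
  have hIoo : Ioo 0 1 ∈ 𝓝 x₀ := Ioo_mem_nhds hx₀.1 hx₀.2
  have hlimL : F x₀ = 0 := by
    refine eq_zero_of_tendsto_mul_of_sq_le (l := 𝓝[<] x₀)
      (nhdsWithin_mono _ fun _ hy => ne_of_lt hy) (mem_nhdsWithin_of_mem_nhds hIoo) hv2
      (hw_sq.filter_mono nhdsWithin_le_nhds)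
      ((hFx₀.tendsto.mono_left nhdsWithin_le_nhds).congr' ?_)
    filter_upwards [Ioo_mem_nhdsLT hx₀.1] with s hs
    exact (hleft s ⟨hs.1.le, hs.2⟩).symm
  have hlimR : F x₀ - F 1 = 0 := by
    refine eq_zero_of_tendsto_mul_of_sq_le (l := 𝓝[>] x₀)
      (nhdsWithin_mono _ fun _ hy => ne_of_gt hy) (mem_nhdsWithin_of_mem_nhds hIoo) hv2
      (hw_sq.filter_mono nhdsWithin_le_nhds)
      (((hFx₀.tendsto.sub_const (F 1)).mono_left nhdsWithin_le_nhds).congr' ?_)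
    filter_upwards [Ioo_mem_nhdsGT hx₀.2] with s hs
    exact (hright s ⟨hs.1, hs.2.le⟩).symm
  change F 1 = 0
  linarith

/-- Integration by parts formula, strongly degenerate case. -/
theorem statement1 (a : ℝ → ℝ) (x₀ : ℝ) (ha : ∃ K, StronglyDeg a x₀ K)
    (u v : ℝ → ℝ) (hu : MemDA1 a u x₀ false) (hv : MemH1aStrong a v x₀) :
    (∫ x in Ioo (0:ℝ) 1, deriv (fun y => a y * deriv u y) x * v x)
      = - ∫ x in Ioo (0:ℝ) 1, a x * deriv u x * deriv v x := by
  obtain ⟨_, ⟨hx₀, hax₀, hapos, -⟩, -, -⟩ := ha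
  obtain ⟨⟨⟨-, -, hau⟩, hw, hw'⟩, hu0, hu1⟩ := hu
  obtain ⟨hv2, hvAC, hav⟩ := hv
  set w := fun y => a y * deriv u y with hw_def
  have hdw_v : IntegrableOn (fun x => deriv w x * v x) (Ioo 0 1) :=
    ((memLp_two_iff_integrable_sq (measurable_deriv w).aestronglyMeasurable).2 hw')
      |>.integrable_mul
      ((memLp_two_iff_integrable_sq (hvAC.aestronglyMeasurable.mono_measure
        (Measure.restrict_mono Ioo_subset_Icc_self le_rfl))).2 hv2)
  have hw_dv : IntegrableOn (fun x => w x * deriv v x) (Ioo 0 1) := by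
    refine integrable_mul_mul_of_integrable_mul_sq ?_ ?_ hau hav
    · filter_upwards [ae_restrict_mem measurableSet_Ioo] with x hx
      rcases eq_or_ne x x₀ with rfl | hne
      · exact hax₀.ge
      · exact (hapos x (Ioo_subset_Icc_self hx) hne).le
    · exact (((hw.absolutelyContinuousOnInterval zero_le_one).continuousOn.mono
        (by simpa using Ioo_subset_Icc_self)).aestronglyMeasurable measurableSet_Ioo).mul
        (measurable_deriv v).aestronglyMeasurable
  have hibp := integral_deriv_mul_add_mul_deriv_eq_zero hx₀ hw hw' (by simp [hw_def, hu0])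
    (by simp [hw_def, hu1]) (by simp [hw_def, hax₀]) hvAC hv2
    ((intervalIntegrable_iff_integrableOn_Ioo_of_le zero_le_one).2 (hdw_v.add hw_dv))
  rw [intervalIntegral.integral_of_le zero_le_one, integral_Ioc_eq_integral_Ioo,
    integral_add hdw_v hw_dv] at hibp
  linarith
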